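/- arXiv:1311.1673 — 5 statements merged into one kernel-verified Lean document; each statement's English description precedes it below -/
import Mathlib

section
/- With the suspension S = (W × Y)/D as below, assume G is compact, Y is Hausdorff, and D acts on W by homeomorphisms. Then for every y₀ ∈ Y, the closure in S of the leaf σ(W × {y₀}) equals σ(W × (G • y₀)), the image under σ of W times the full G-orbit of y₀. -/
open Pointwise

variable {D G : Type*} [Group D] [Group G]

/-- The diagonal equivalence relation on `W × Y` defining the suspension
`S = (W × Y)/D`, where `d • (w, y) = (d • w, φ d • y)`. -/
def suspRel (W Y : Type*) [MulAction D W] [MulAction G Y] (φ : D →* G) :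
    Setoid (W × Y) where
  r p q := ∃ d : D, d • p.1 = q.1 ∧ φ d • p.2 = q.2
  iseqv := by
    constructor
    · intro p; exact ⟨1, by simp⟩
    · rintro p q ⟨d, h1, h2⟩
      exact ⟨d⁻¹, by simp [← h1, ← h2]⟩
    · rintro p q r ⟨d, h1, h2⟩ ⟨e, h3, h4⟩
      exact ⟨e * d, by simp [mul_smul, h1, h2, h3, h4]⟩

/-- For the suspension `S = (W × Y)/D`, with `G` compact, `Y` Hausdorff and `D`
acting on `W` by homeomorphisms, the closure in `S` of the leaf `σ(W × {y₀})`
equals `σ(W × (G • y₀))`, the image under `σ` of `W` times the full `G`-orbit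
of `y₀`. -/
theorem closure_leaf_eq_saturated_orbit
    {W Y : Type*} [MulAction D W] [MulAction G Y]
    [TopologicalSpace W] [TopologicalSpace Y] [TopologicalSpace G]
    [IsTopologicalGroup G] [CompactSpace G] [T2Space Y] [ContinuousSMul G Y]
    (hW : ∀ d : D, Continuous fun w : W => d • w)
    (φ : D →* G) (hφ : DenseRange φ) (y₀ : Y) :
    closure (Quotient.mk (suspRel W Y φ) '' (Set.univ ×ˢ ({y₀} : Set Y))) =
      Quotient.mk (suspRel W Y φ) '' (Set.univ ×ˢ MulAction.orbit G y₀) := by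
  classical
  set s := suspRel W Y φ with hs
  have hσ : Continuous (Quotient.mk s) := continuous_quotient_mk'
  have horb_cpt : IsCompact (MulAction.orbit G y₀) :=
    isCompact_range (continuous_id.smul continuous_const)
  have horb_closed : IsClosed (MulAction.orbit G y₀) := horb_cpt.isClosed
  have hsat : Quotient.mk s ⁻¹' (Quotient.mk s '' (Set.univ ×ˢ MulAction.orbit G y₀))
      = Set.univ ×ˢ MulAction.orbit G y₀ := by
    ext ⟨w, y⟩
    constructor
    · rintro ⟨⟨w', y'⟩, hmem, h⟩
      obtain ⟨d, hd1, hd2⟩ := Quotient.exact h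
      obtain ⟨g, hg⟩ := hmem.2
      refine ⟨Set.mem_univ _, ⟨φ d * g, ?_⟩⟩
      show (φ d * g) • y₀ = y
      rw [mul_smul]
      show φ d • g • y₀ = y
      rw [show g • y₀ = y' from hg]
      exact hd2
    · intro hy
      exact ⟨(w, y), ⟨Set.mem_univ _, hy.2⟩, rfl⟩
  have hclosed : IsClosed (Quotient.mk s '' (Set.univ ×ˢ MulAction.orbit G y₀)) := by
    have hq : Topology.IsQuotientMap (Quotient.mk s) := isQuotientMap_quot_mk
    rw [← hq.isClosed_preimage, hsat]
    exact isClosed_univ.prod horb_closed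
  apply subset_antisymm
  · apply closure_minimal _ hclosed
    apply Set.image_mono
    rintro ⟨w, y⟩ ⟨-, hy⟩
    exact ⟨Set.mem_univ _, by rw [Set.mem_singleton_iff.mp hy]; exact MulAction.mem_orbit_self y₀⟩
  · rintro p ⟨⟨w, y⟩, ⟨-, hy⟩, rfl⟩
    obtain ⟨g, rfl⟩ := hy
    set L := Quotient.mk s '' (Set.univ ×ˢ ({y₀} : Set Y)) with hL
    have hCclosed : IsClosed {y : Y | Quotient.mk s (w, y) ∈ closure L} :=
      IsClosed.preimage (hσ.comp (Continuous.prodMk_right w)) isClosed_closure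
    have hsub : Set.range (fun d : D => φ d • y₀) ⊆
        {y : Y | Quotient.mk s (w, y) ∈ closure L} := by
      rintro y ⟨d, rfl⟩
      apply subset_closure
      refine ⟨(d⁻¹ • w, y₀), ⟨Set.mem_univ _, rfl⟩, ?_⟩
      exact Quotient.sound ⟨d, by simp [smul_smul]⟩
    have hdense : g • y₀ ∈ closure (Set.range (fun d : D => φ d • y₀)) := by
      have hc : Continuous (fun g : G => g • y₀) := continuous_id.smul continuous_const
      have := image_closure_subset_closure_image (s := Set.range φ) hc
      rw [hφ.closure_range, Set.image_univ] at this
      have hmem : g • y₀ ∈ Set.range (fun g : G => g • y₀) := ⟨g, rfl⟩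
      have := this hmem
      rwa [← Set.range_comp] at this
    exact (closure_minimal hsub hCclosed) hdense
end

section
/- With the suspension S = (W × Y)/D as below, assume G is compact, Y is Hausdorff, D acts on W by homeomorphisms, and W is nonempty. Then the assignment sending the G-orbit G • y to the set σ(W × (G • y)) ⊆ S is well defined (depends only on the orbit) and is a bijection from the set of G-orbits in Y onto the set of leaf closures of S, i.e. onto { closure(σ(W × {y})) : y ∈ Y }. -/
open Pointwise

variable {D G : Type*} [Group D] [Group G]

section Aux

variable {W Y : Type*} [MulAction D W] [MulAction G Y]
    [TopologicalSpace W] [TopologicalSpace Y] [TopologicalSpace G]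
    [IsTopologicalGroup G] [CompactSpace G] [T2Space Y] [ContinuousSMul G Y]

lemma susp_orbit_isClosed (y : Y) : IsClosed (MulAction.orbit G y) :=
  (isCompact_range (continuous_id.smul continuous_const)).isClosed

lemma susp_mk_isQuotientMap (φ : D →* G) :
    Topology.IsQuotientMap (Quotient.mk (suspRel W Y φ)) :=
  isQuotientMap_quot_mk

lemma susp_dense_dorbit (φ : D →* G) (hφ : DenseRange φ) (y : Y) :
    closure (Set.range fun d : D => φ d • y) = MulAction.orbit G y := by
  apply subset_antisymm
  · exact closure_minimal (by rintro _ ⟨d, rfl⟩; exact ⟨φ d, rfl⟩) (susp_orbit_isClosed y)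
  · have hc : Continuous fun g : G => g • y := continuous_id.smul continuous_const
    rintro _ ⟨g, rfl⟩
    have hg : g ∈ closure (Set.range φ) := by rw [hφ.closure_range]; trivial
    have h2 := image_closure_subset_closure_image (s := Set.range φ) hc
    have := h2 ⟨g, hg, rfl⟩
    simpa [← Set.range_comp, Function.comp_def] using this

lemma susp_sat (φ : D →* G) (y : Y) :
    Quotient.mk (suspRel W Y φ) ⁻¹'
        (Quotient.mk (suspRel W Y φ) '' (Set.univ ×ˢ MulAction.orbit G y))
      = Set.univ ×ˢ MulAction.orbit G y := by
  ext ⟨w, z⟩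
  constructor
  · rintro ⟨⟨w', z'⟩, hmem, h⟩
    obtain ⟨d, hd1, hd2⟩ := Quotient.exact h
    obtain ⟨g, hg⟩ := hmem.2
    refine ⟨trivial, ?_⟩
    have hg' : g • y = z' := hg
    have hz : z = (φ d * g) • y := by rw [mul_smul, hg']; exact hd2.symm
    exact hz ▸ MulAction.mem_orbit y (φ d * g)
  · intro hz
    exact ⟨(w, z), hz, rfl⟩

lemma susp_leaf_closure (φ : D →* G) (hφ : DenseRange φ) (y : Y) :
    closure (Quotient.mk (suspRel W Y φ) '' (Set.univ ×ˢ ({y} : Set Y)))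
      = Quotient.mk (suspRel W Y φ) '' (Set.univ ×ˢ MulAction.orbit G y) := by
  have hqm := susp_mk_isQuotientMap (W := W) (Y := Y) φ
  have hclosed : IsClosed
      (Quotient.mk (suspRel W Y φ) '' (Set.univ ×ˢ MulAction.orbit G y)) := by
    rw [← hqm.isClosed_preimage, susp_sat]
    exact isClosed_univ.prod (susp_orbit_isClosed y)
  apply subset_antisymm
  · refine closure_minimal (Set.image_mono (Set.prod_mono_right ?_)) hclosed
    intro z hz
    rw [Set.mem_singleton_iff] at hz
    subst hz
    exact MulAction.mem_orbit_self _
  · rintro _ ⟨⟨w, z⟩, ⟨-, hz⟩, rfl⟩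
    have hcont : Continuous fun z' : Y => Quotient.mk (suspRel W Y φ) (w, z') :=
      hqm.continuous.comp (Continuous.prodMk_right w)
    have hz' : z ∈ closure (Set.range fun d : D => φ d • y) := by
      rw [susp_dense_dorbit φ hφ y]; exact hz
    have hmem : Quotient.mk (suspRel W Y φ) (w, z) ∈
        closure ((fun z' => Quotient.mk (suspRel W Y φ) (w, z')) ''
          (Set.range fun d : D => φ d • y)) :=
      image_closure_subset_closure_image hcont ⟨z, hz', rfl⟩
    refine closure_mono ?_ hmem
    rintro _ ⟨_, ⟨d, rfl⟩, rfl⟩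
    refine ⟨(d⁻¹ • w, y), ⟨trivial, rfl⟩, Quotient.sound ⟨d, ?_, rfl⟩⟩
    simp [smul_smul]

end Aux

/-- For the suspension `S = (W × Y)/D` with `G` compact, `Y` Hausdorff, `D`
acting on `W` by homeomorphisms and `W` nonempty, the assignment sending the
`G`-orbit `G • y` to `σ(W × (G • y)) ⊆ S` is well defined (it depends only on
the orbit) and is a bijection from the set of `G`-orbits in `Y` onto the set
of leaf closures of `S`, i.e. onto `{ closure (σ(W × {y})) : y ∈ Y }`. -/
theorem orbit_leafClosure_correspondence
    {W Y : Type*} [MulAction D W] [MulAction G Y]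
    [TopologicalSpace W] [TopologicalSpace Y] [TopologicalSpace G]
    [IsTopologicalGroup G] [CompactSpace G] [T2Space Y] [ContinuousSMul G Y]
    (hW : ∀ d : D, Continuous fun w : W => d • w)
    (φ : D →* G) (hφ : DenseRange φ) (hne : Nonempty W) :
    (∀ y₁ y₂ : Y, MulAction.orbit G y₁ = MulAction.orbit G y₂ →
      Quotient.mk (suspRel W Y φ) '' (Set.univ ×ˢ MulAction.orbit G y₁) =
        Quotient.mk (suspRel W Y φ) '' (Set.univ ×ˢ MulAction.orbit G y₂)) ∧
    Set.BijOn (fun O : Set Y => Quotient.mk (suspRel W Y φ) '' (Set.univ ×ˢ O))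
      {O : Set Y | ∃ y : Y, O = MulAction.orbit G y}
      {C : Set (Quotient (suspRel W Y φ)) | ∃ y : Y,
        C = closure (Quotient.mk (suspRel W Y φ) '' (Set.univ ×ˢ ({y} : Set Y)))} := by
  obtain ⟨w₀⟩ := hne
  constructor
  · intro y₁ y₂ h; rw [h]
  · refine ⟨?_, ?_, ?_⟩
    · rintro O ⟨y, rfl⟩
      exact ⟨y, (susp_leaf_closure φ hφ y).symm⟩
    · rintro O₁ ⟨y₁, rfl⟩ O₂ ⟨y₂, rfl⟩ h
      dsimp only at h
      have h1 : Quotient.mk (suspRel W Y φ) (w₀, y₁) ∈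
          Quotient.mk (suspRel W Y φ) '' (Set.univ ×ˢ MulAction.orbit G y₂) := by
        rw [← h]
        exact ⟨(w₀, y₁), ⟨trivial, MulAction.mem_orbit_self y₁⟩, rfl⟩
      obtain ⟨⟨w', z'⟩, hmem, heq⟩ := h1
      obtain ⟨d, hd1, hd2⟩ := Quotient.exact heq
      have hy : y₁ ∈ MulAction.orbit G y₂ := by
        obtain ⟨g, hg⟩ := hmem.2
        have hg' : g • y₂ = z' := hg
        refine ⟨φ d * g, ?_⟩
        show (φ d * g) • y₂ = y₁
        rw [mul_smul, hg']; exact hd2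
      exact MulAction.orbit_eq_iff.mpr hy
    · rintro C ⟨y, rfl⟩
      exact ⟨MulAction.orbit G y, ⟨y, rfl⟩, (susp_leaf_closure φ hφ y).symm⟩
end

section
/- With the suspension S = (W × Y)/D as below, assume W is nonempty. Then the map Γ sending a continuous G-invariant function f : Y → ℝ (i.e. f(g • y) = f(y) for all g ∈ G, y ∈ Y) to the function F : S → ℝ determined by F(σ(w, y)) = f(y) is well defined, and it is a bijection from the set of continuous G-invariant functions on Y onto the set of continuous functions F : S → ℝ that are constant on each leaf, i.e. satisfying F(σ(w, y)) = F(σ(w', y)) for all w, w' ∈ W and y ∈ Y. -/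
open Pointwise

variable {D G : Type*} [Group D] [Group G]

/-- For the suspension `S = (W × Y)/D` with `W` nonempty, the map `Γ` sending
a continuous `G`-invariant function `f : Y → ℝ` to the function `F : S → ℝ`
determined by `F(σ(w, y)) = f(y)` is well defined, and is a bijection from the
set of continuous `G`-invariant functions on `Y` onto the set of continuous
functions on `S` that are constant on each leaf. -/
theorem invariant_basic_function_correspondence
    {W Y : Type*} [MulAction D W] [MulAction G Y]
    [TopologicalSpace W] [TopologicalSpace Y] [TopologicalSpace G]
    [ContinuousSMul G Y]
    (φ : D →* G) (hφ : DenseRange φ) (hne : Nonempty W) :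
    ∃ Γ : (Y → ℝ) → (Quotient (suspRel W Y φ) → ℝ),
      (∀ f : Y → ℝ, (Continuous f ∧ ∀ (g : G) (y : Y), f (g • y) = f y) →
        ∀ (w : W) (y : Y), Γ f (Quotient.mk (suspRel W Y φ) (w, y)) = f y) ∧
      Set.BijOn Γ
        {f : Y → ℝ | Continuous f ∧ ∀ (g : G) (y : Y), f (g • y) = f y}
        {F : Quotient (suspRel W Y φ) → ℝ | Continuous F ∧
          ∀ (w w' : W) (y : Y),
            F (Quotient.mk (suspRel W Y φ) (w, y)) =
              F (Quotient.mk (suspRel W Y φ) (w', y))} := by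
 
  classical
  obtain ⟨w0⟩ := hne
  set Γ : (Y → ℝ) → (Quotient (suspRel W Y φ) → ℝ) := fun f =>
    if h : ∀ (g : G) (y : Y), f (g • y) = f y then
      Quotient.lift (fun p : W × Y => f p.2) (by
        rintro p q ⟨d, h1, h2⟩
        simp only [← h2, h]) else fun _ => 0 with hΓdef
  have hΓ : ∀ f : Y → ℝ, (∀ (g : G) (y : Y), f (g • y) = f y) →
      ∀ (w : W) (y : Y), Γ f (Quotient.mk (suspRel W Y φ) (w, y)) = f y := by
    intro f hf w y
    simp only [hΓdef, dif_pos hf]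
    rfl
  refine ⟨Γ, fun f hf => hΓ f hf.2, ?_, ?_, ?_⟩
  · rintro f ⟨hfc, hfi⟩
    constructor
    · simp only [hΓdef, dif_pos hfi]
      exact Continuous.quotient_lift (hfc.comp continuous_snd) _
    · intro w w' y
      rw [hΓ f hfi, hΓ f hfi]
  · rintro f1 ⟨_, h1⟩ f2 ⟨_, h2⟩ heq
    funext y
    rw [← hΓ f1 h1 w0 y, ← hΓ f2 h2 w0 y, heq]
  · rintro F ⟨hFc, hFl⟩
    set f : Y → ℝ := fun y => F (Quotient.mk (suspRel W Y φ) (w0, y)) with hfdef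
    have hmkc : Continuous fun y : Y => Quotient.mk (suspRel W Y φ) (w0, y) :=
      continuous_quotient_mk'.comp (Continuous.prodMk_right w0)
    have hfi : ∀ (g : G) (y : Y), f (g • y) = f y := by
      intro g y
      have heq : (fun g : G => F (Quotient.mk (suspRel W Y φ) (w0, g • y)))
          = fun _ : G => F (Quotient.mk (suspRel W Y φ) (w0, y)) := by
        apply hφ.equalizer
        · exact (hFc.comp hmkc).comp (continuous_id.smul continuous_const)
        · exact continuous_const
        · funext d
          show F (Quotient.mk (suspRel W Y φ) (w0, φ d • y)) = _
          rw [hFl w0 (d • w0) (φ d • y)]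
          congr 1
          exact Quotient.sound ⟨d⁻¹, by simp [← mul_smul]⟩
      exact congrFun heq g
    refine ⟨f, ⟨hFc.comp hmkc, hfi⟩, ?_⟩
    funext s
    induction s using Quotient.ind with
    | _ p =>
      obtain ⟨w, y⟩ := p
      rw [hΓ f hfi w y, hfdef]
      exact hFl w0 w y
end

section
/- For every natural number n there exists an element x of the n-dimensional torus (ℝ/ℤ)ⁿ, i.e. x : Fin n → AddCircle 1, whose cyclic subgroup {k • x : k ∈ ℤ} is dense in (ℝ/ℤ)ⁿ. -/
open MeasureTheory Set Function


abbrev Tor (n : ℕ) := Fin n → AddCircle (1 : ℝ)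

noncomputable instance : IsProbabilityMeasure (volume : Measure (AddCircle (1:ℝ))) :=
  ⟨by simp [AddCircle.measure_univ]⟩

variable {n : ℕ}

/-- Character of the torus. -/
noncomputable def chi (m : Fin n → ℤ) : C(Tor n, ℂ) :=
  ⟨fun y => ∏ i, fourier (m i) (y i),
   continuous_finset_prod _ fun i _ =>
     (map_continuous (fourier (m i))).comp (continuous_apply i)⟩

lemma chi_apply (m : Fin n → ℤ) (y : Tor n) : chi m y = ∏ i, fourier (m i) (y i) := rfl

lemma chi_add_arg (m : Fin n → ℤ) (a b : Tor n) : chi m (a + b) = chi m a * chi m b := by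
  simp only [chi_apply, ← Finset.prod_mul_distrib]
  refine Finset.prod_congr rfl fun i _ => ?_
  show fourier (m i) (a i + b i) = _
  simp [fourier_apply, smul_add, AddCircle.toCircle_add]

lemma chi_mul (m m' : Fin n → ℤ) : chi (m + m') = chi m * chi m' := by
  ext y
  simp [chi_apply, ← Finset.prod_mul_distrib, fourier_add]

lemma chi_zero : chi (0 : Fin n → ℤ) = 1 := by
  ext y; simp [chi_apply, fourier_zero]

lemma chi_neg (m : Fin n → ℤ) : chi (-m) = star (chi m) := by
  ext y
  simp [chi_apply, fourier_neg, map_prod]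

lemma norm_chi (m : Fin n → ℤ) (y : Tor n) : ‖chi m y‖ = 1 := by
  rw [chi_apply, norm_prod]
  refine Finset.prod_eq_one fun i _ => ?_
  rw [fourier_apply]
  exact Circle.norm_coe _

lemma chi_nsmul (m : Fin n → ℤ) (y : Tor n) (k : ℕ) : chi m (k • y) = chi m y ^ k := by
  induction k with
  | zero => simp [chi_apply, fourier_eval_zero]
  | succ k ih => rw [succ_nsmul, chi_add_arg, ih, pow_succ]

lemma int_fourier (j : ℤ) :
    ∫ z : AddCircle (1:ℝ), fourier j z = if j = 0 then 1 else 0 := by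
  haveI : IsProbabilityMeasure (volume : Measure (AddCircle (1:ℝ))) :=
    ⟨by simp [AddCircle.measure_univ]⟩
  rcases eq_or_ne j 0 with rfl | hj
  · simp [fourier_zero]
  · rw [if_neg hj]
    have key : ∀ z : AddCircle (1:ℝ),
        fourier j (z + ((1 / 2 / j : ℝ) : AddCircle (1:ℝ))) = -fourier j z :=
      fun z => fourier_add_half_inv_index hj one_pos z
    have h1 : ∫ z : AddCircle (1:ℝ), fourier j (z + ((1 / 2 / j : ℝ) : AddCircle (1:ℝ)))
        = ∫ z : AddCircle (1:ℝ), fourier j z :=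
      integral_add_right_eq_self _ _
    rw [funext key] at h1
    have h2 : ∫ z : AddCircle (1:ℝ), -fourier j z = -∫ z : AddCircle (1:ℝ), fourier j z :=
      integral_neg _
    have := h1.symm.trans h2
    linear_combination (this) / 2



lemma int_chi (m : Fin n → ℤ) :
    ∫ y : Tor n, chi m y = if m = 0 then 1 else 0 := by
  have : ∫ y : Tor n, chi m y = ∏ i, ∫ z : AddCircle (1:ℝ), fourier (m i) z :=
    MeasureTheory.integral_fintype_prod_eq_prod (fun i z => fourier (m i) z)
  rw [this]
  rcases eq_or_ne m 0 with rfl | hm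
  · simp [int_fourier]
  · obtain ⟨i, hi⟩ : ∃ i, m i ≠ 0 := by
      by_contra h; push_neg at h; exact hm (funext h)
    rw [if_neg hm]
    exact Finset.prod_eq_zero (Finset.mem_univ i) (by rw [int_fourier, if_neg hi])

open scoped ComplexConjugate

/-- The star subalgebra generated by the characters. -/
noncomputable def torSubalgebra (n : ℕ) : StarSubalgebra ℂ C(Tor n, ℂ) where
  toSubalgebra := Algebra.adjoin ℂ (Set.range (chi (n := n)))
  star_mem' := by
    show Algebra.adjoin ℂ (Set.range (chi (n := n))) ≤
      star (Algebra.adjoin ℂ (Set.range (chi (n := n))))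
    refine Algebra.adjoin_le ?_
    rintro - ⟨m, rfl⟩
    refine Algebra.subset_adjoin ⟨-m, ?_⟩
    rw [chi_neg]

lemma torSubalgebra_coe :
    Subalgebra.toSubmodule (torSubalgebra n).toSubalgebra
      = Submodule.span ℂ (Set.range (chi (n := n))) := by
  apply Algebra.adjoin_eq_span_of_subset
  refine Set.Subset.trans ?_ Submodule.subset_span
  intro x hx
  refine Submonoid.closure_induction (fun _ => id) ⟨0, chi_zero⟩ ?_ hx
  rintro - - - - ⟨m, rfl⟩ ⟨m', rfl⟩
  exact ⟨m + m', chi_mul m m'⟩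

lemma torSubalgebra_separatesPoints : (torSubalgebra n).SeparatesPoints := by
  intro x y hxy
  obtain ⟨i, hi⟩ : ∃ i, x i ≠ y i := by
    by_contra h; push_neg at h; exact hxy (funext h)
  refine ⟨_, ⟨chi (Pi.single i 1), Algebra.subset_adjoin ⟨Pi.single i 1, rfl⟩, rfl⟩, ?_⟩
  have hx : ∀ z : Tor n, chi (Pi.single i 1) z = fourier 1 (z i) := by
    intro z
    rw [chi_apply]
    rw [Finset.prod_eq_single_of_mem i (Finset.mem_univ i)]
    · rw [Pi.single_eq_same]
    · intro j _ hj
      rw [Pi.single_eq_of_ne hj]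
      exact fourier_zero
  dsimp only
  rw [hx, hx, fourier_one, fourier_one]
  intro h
  rw [Circle.coe_inj] at h
  exact hi (AddCircle.injective_toCircle one_ne_zero h)

lemma span_chi_closure_eq_top :
    (Submodule.span ℂ (Set.range (chi (n := n)))).topologicalClosure = ⊤ := by
  rw [← torSubalgebra_coe]
  exact congr_arg (Subalgebra.toSubmodule <| StarSubalgebra.toSubalgebra ·)
    (ContinuousMap.starSubalgebra_topologicalClosure_eq_top_of_separatesPoints _
      torSubalgebra_separatesPoints)

lemma cmap_integrable (f : C(Tor n, ℂ)) : Integrable f (volume : Measure (Tor n)) :=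
  f.continuous.integrable_of_hasCompactSupport (HasCompactSupport.of_compactSpace f)

noncomputable def birk (x : Tor n) (N : ℕ) (f : C(Tor n, ℂ)) : ℂ :=
  (N : ℂ)⁻¹ • ∑ k ∈ Finset.range N, f (k • x)

lemma norm_birk_le (x : Tor n) (N : ℕ) (f : C(Tor n, ℂ)) : ‖birk x N f‖ ≤ ‖f‖ := by
  rcases Nat.eq_zero_or_pos N with rfl | hN
  · simp [birk, norm_nonneg]
  · rw [birk, norm_smul]
    have h1 : ‖∑ k ∈ Finset.range N, f (k • x)‖ ≤ N * ‖f‖ := by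
      refine (norm_sum_le _ _).trans ?_
      calc ∑ k ∈ Finset.range N, ‖f (k • x)‖ ≤ ∑ k ∈ Finset.range N, ‖f‖ :=
            Finset.sum_le_sum fun k _ => f.norm_coe_le_norm _
        _ = N * ‖f‖ := by rw [Finset.sum_const, Finset.card_range, nsmul_eq_mul]
    have h2 : ‖(N : ℂ)⁻¹‖ = (N : ℝ)⁻¹ := by
      rw [norm_inv, Complex.norm_natCast]
    rw [h2]
    calc (N:ℝ)⁻¹ * ‖∑ k ∈ Finset.range N, f (k • x)‖ ≤ (N:ℝ)⁻¹ * (N * ‖f‖) := by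
          exact mul_le_mul_of_nonneg_left h1 (by positivity)
      _ = ‖f‖ := by field_simp

lemma birk_add (x : Tor n) (N : ℕ) (f g : C(Tor n, ℂ)) :
    birk x N (f + g) = birk x N f + birk x N g := by
  simp [birk, Finset.sum_add_distrib, smul_add, mul_add]

lemma birk_smul (x : Tor n) (N : ℕ) (c : ℂ) (f : C(Tor n, ℂ)) :
    birk x N (c • f) = c * birk x N f := by
  simp only [birk, ContinuousMap.smul_apply, smul_eq_mul, Finset.mul_sum]
  exact Finset.sum_congr rfl fun k _ => by ring

lemma tendsto_birk_chi (x : Tor n) (hx : ∀ m : Fin n → ℤ, m ≠ 0 → chi m x ≠ 1)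
    (m : Fin n → ℤ) :
    Filter.Tendsto (fun N => birk x N (chi m)) Filter.atTop (nhds (∫ y : Tor n, chi m y)) := by
  rcases eq_or_ne m 0 with rfl | hm
  · rw [int_chi, if_pos rfl]
    have : ∀ N : ℕ, 1 ≤ N → birk x N (chi 0) = 1 := by
      intro N hN
      have hN' : (N : ℂ) ≠ 0 := Nat.cast_ne_zero.mpr (by omega)
      simp only [birk, chi_zero, ContinuousMap.one_apply, Finset.sum_const,
        Finset.card_range, nsmul_eq_mul, mul_one, smul_eq_mul]
      rw [inv_mul_cancel₀ hN']
    refine Filter.Tendsto.congr' ?_ tendsto_const_nhds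
    filter_upwards [Filter.eventually_ge_atTop 1] with N hN
    exact (this N hN).symm
  · rw [int_chi, if_neg hm]
    set z : ℂ := chi m x with hz
    have hz1 : z ≠ 1 := hx m hm
    have hzn : ‖z‖ = 1 := norm_chi m x
    have hb : ∀ N : ℕ, ‖birk x N (chi m)‖ ≤ 2 / ‖z - 1‖ * ((N : ℝ))⁻¹ := by
      intro N
      have hsum : ∑ k ∈ Finset.range N, chi m (k • x) = (z ^ N - 1) / (z - 1) := by
        rw [← geom_sum_eq hz1 N]
        exact Finset.sum_congr rfl fun k _ => chi_nsmul m x k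
      have hnum : ‖z ^ N - 1‖ ≤ 2 := by
        calc ‖z ^ N - 1‖ ≤ ‖z ^ N‖ + ‖(1:ℂ)‖ := norm_sub_le _ _
          _ = 2 := by rw [norm_pow, hzn, one_pow, norm_one]; norm_num
      rw [birk, hsum, norm_smul, norm_inv, Complex.norm_natCast, norm_div]
      have hd : 0 < ‖z - 1‖ := norm_pos_iff.mpr (sub_ne_zero.mpr hz1)
      rw [mul_comm]
      gcongr
    have h0 : Filter.Tendsto (fun N : ℕ => 2 / ‖z - 1‖ * ((N : ℝ))⁻¹)
        Filter.atTop (nhds 0) := by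
      simpa using tendsto_inv_atTop_nhds_zero_nat.const_mul (2 / ‖z - 1‖)
    exact squeeze_zero_norm hb h0

lemma birk_sub (x : Tor n) (N : ℕ) (f g : C(Tor n, ℂ)) :
    birk x N (f - g) = birk x N f - birk x N g := by
  simp only [birk, ContinuousMap.sub_apply, Finset.sum_sub_distrib, smul_sub]

lemma norm_int_le (f : C(Tor n, ℂ)) : ‖∫ y : Tor n, f y‖ ≤ ‖f‖ := by
  have h := norm_integral_le_of_norm_le_const (μ := (volume : Measure (Tor n)))
    (C := ‖f‖) (f := fun y => f y)
    (Filter.Eventually.of_forall fun y => f.norm_coe_le_norm y)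
  simpa [measure_univ] using h

lemma tendsto_birk_span (x : Tor n) (hx : ∀ m : Fin n → ℤ, m ≠ 0 → chi m x ≠ 1)
    (g : C(Tor n, ℂ)) (hg : g ∈ Submodule.span ℂ (Set.range (chi (n := n)))) :
    Filter.Tendsto (fun N => birk x N g) Filter.atTop (nhds (∫ y : Tor n, g y)) := by
  induction hg using Submodule.span_induction with
  | mem g hgmem =>
    obtain ⟨m, rfl⟩ := hgmem
    exact tendsto_birk_chi x hx m
  | zero =>
    have : ∀ N, birk x N 0 = 0 := fun N => by simp [birk]
    simp only [this, ContinuousMap.zero_apply, integral_zero]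
    exact tendsto_const_nhds
  | add g h _ _ ihg ihh =>
    have : ∀ N, birk x N (g + h) = birk x N g + birk x N h := fun N => birk_add x N g h
    simp only [this, ContinuousMap.add_apply]
    rw [integral_add (cmap_integrable g) (cmap_integrable h)]
    exact ihg.add ihh
  | smul c g _ ihg =>
    have : ∀ N, birk x N (c • g) = c * birk x N g := fun N => birk_smul x N c g
    simp only [this, ContinuousMap.smul_apply]
    rw [integral_smul]
    exact ihg.const_mul c

lemma tendsto_birk (x : Tor n) (hx : ∀ m : Fin n → ℤ, m ≠ 0 → chi m x ≠ 1)
    (f : C(Tor n, ℂ)) :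
    Filter.Tendsto (fun N => birk x N f) Filter.atTop (nhds (∫ y : Tor n, f y)) := by
  rw [Metric.tendsto_atTop]
  intro ε hε
  have hf : f ∈ closure ((Submodule.span ℂ (Set.range (chi (n := n)))) : Set C(Tor n, ℂ)) := by
    have h1 : f ∈ (Submodule.span ℂ (Set.range (chi (n := n)))).topologicalClosure := by
      rw [span_chi_closure_eq_top]; trivial
    exact h1
  obtain ⟨g, hgspan, hgf⟩ := Metric.mem_closure_iff.mp hf (ε / 3) (by positivity)
  have hg := tendsto_birk_span x hx g hgspan
  rw [Metric.tendsto_atTop] at hg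
  obtain ⟨N₀, hN₀⟩ := hg (ε / 3) (by positivity)
  refine ⟨N₀, fun N hN => ?_⟩
  have d1 : dist (birk x N f) (birk x N g) ≤ dist f g := by
    rw [dist_eq_norm, ← birk_sub, dist_eq_norm]
    exact norm_birk_le x N (f - g)
  have d3 : dist (∫ y : Tor n, g y) (∫ y : Tor n, f y) ≤ dist f g := by
    rw [dist_eq_norm, ← integral_sub (cmap_integrable g) (cmap_integrable f)]
    have : (fun y => g y - f y) = fun y => (g - f) y := by
      ext y; simp
    rw [this]
    calc ‖∫ y : Tor n, (g - f) y‖ ≤ ‖g - f‖ := norm_int_le (g - f)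
      _ = dist f g := by rw [← dist_eq_norm, dist_comm]
  calc dist (birk x N f) (∫ y : Tor n, f y)
      ≤ dist (birk x N f) (birk x N g) + dist (birk x N g) (∫ y : Tor n, g y)
        + dist (∫ y : Tor n, g y) (∫ y : Tor n, f y) := dist_triangle4 _ _ _ _
    _ < ε / 3 + ε / 3 + ε / 3 := by
        exact add_lt_add (add_lt_add_of_le_of_lt (d1.trans hgf.le) (hN₀ N hN))
          (d3.trans_lt hgf)
    _ = ε := by ring

set_option maxHeartbeats 800000 in
lemma dense_orbit (x : Tor n) (hx : ∀ m : Fin n → ℤ, m ≠ 0 → chi m x ≠ 1) :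
    Dense ((AddSubgroup.zmultiples x : AddSubgroup (Tor n)) : Set (Tor n)) := by
  rw [Metric.dense_iff]
  intro y r hr
  by_contra hempty
  rw [Set.not_nonempty_iff_eq_empty] at hempty
  have horb : ∀ k : ℕ, (k • x) ∉ Metric.ball y r := by
    intro k hk
    have hmem : k • x ∈ (AddSubgroup.zmultiples x : AddSubgroup (Tor n)) := by
      have : ((k : ℤ)) • x ∈ AddSubgroup.zmultiples x :=
        AddSubgroup.zsmul_mem _ (AddSubgroup.mem_zmultiples x) _
      rwa [natCast_zsmul] at this
    exact Set.eq_empty_iff_forall_notMem.mp hempty (k • x) ⟨hk, hmem⟩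
  -- the bump function
  set f₀ : Tor n → ℝ := fun z => max (1 - dist z y / r) 0 with hf₀
  have hcont : Continuous f₀ :=
    (continuous_const.sub ((continuous_id.dist continuous_const).div_const r)).max
      continuous_const
  have hnonneg : ∀ z, 0 ≤ f₀ z := fun z => le_max_right _ _
  set F : C(Tor n, ℂ) := ⟨fun z => (f₀ z : ℂ), Complex.continuous_ofReal.comp hcont⟩ with hF
  have hFzero : ∀ N, birk x N F = 0 := by
    intro N
    have : ∀ k ∈ Finset.range N, F (k • x) = 0 := by
      intro k _
      have hd : r ≤ dist (k • x) y := le_of_not_gt fun h => horb k (Metric.mem_ball.mpr h)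
      have : f₀ (k • x) = 0 := by
        rw [hf₀]
        simp only [max_eq_right_iff]
        have : (1:ℝ) ≤ dist (k • x) y / r := (one_le_div hr).mpr hd
        linarith
      simp [hF, this]
    rw [birk, Finset.sum_congr rfl this, Finset.sum_const, smul_zero, smul_zero]
  have hlim := tendsto_birk x hx F
  have hint : ∫ z : Tor n, F z = 0 := by
    have h1 : Filter.Tendsto (fun N => birk x N F) Filter.atTop (nhds 0) := by
      simpa [hFzero] using tendsto_const_nhds (α := ℂ) (f := Filter.atTop (α := ℕ))
    exact tendsto_nhds_unique hlim h1
  have hreal : ∫ z : Tor n, F z = ((∫ z : Tor n, f₀ z : ℝ) : ℂ) := integral_ofReal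
  have hpos : 0 < ∫ z : Tor n, f₀ z := by
    rw [integral_pos_iff_support_of_nonneg hnonneg
      (hcont.integrable_of_hasCompactSupport (HasCompactSupport.of_compactSpace f₀))]
    have hsub : Metric.ball y r ⊆ Function.support f₀ := by
      intro z hz
      have : dist z y / r < 1 := (div_lt_one hr).mpr (Metric.mem_ball.mp hz)
      have : 0 < f₀ z := lt_max_of_lt_left (by linarith)
      exact this.ne'
    calc (0:ENNReal) < volume (Metric.ball y r) := Metric.measure_ball_pos _ y hr
      _ ≤ volume (Function.support f₀) := measure_mono hsub
  rw [hreal] at hint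
  exact absurd (Complex.ofReal_eq_zero.mp hint) hpos.ne'

lemma toCircle_sum {ι : Type*} (s : Finset ι) (c : ι → AddCircle (1:ℝ)) :
    (∏ i ∈ s, (AddCircle.toCircle (c i) : ℂ)) = AddCircle.toCircle (∑ i ∈ s, c i) := by
  induction s using Finset.cons_induction with
  | empty => simp
  | cons a s ha ih => rw [Finset.prod_cons, Finset.sum_cons, ih, AddCircle.toCircle_add]; push_cast; ring

/-- The candidate topological generator: powers of a Liouville number. -/
noncomputable def gen (n : ℕ) : Tor n :=
  fun i => ((liouvilleNumber 3 ^ ((i : ℕ) + 1) : ℝ) : AddCircle (1:ℝ))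

lemma gen_spec (m : Fin n → ℤ) (hm : m ≠ 0) : chi m (gen n) ≠ 1 := by
  intro h1
  set α : ℝ := liouvilleNumber 3 with hα
  set θ : ℝ := ∑ i : Fin n, (m i : ℝ) * α ^ ((i : ℕ) + 1) with hθ
  have key : chi m (gen n) = AddCircle.toCircle ((θ : AddCircle (1:ℝ))) := by
    rw [chi_apply]
    have h2 : ∀ i : Fin n, (fourier (m i) (gen n i) : ℂ)
        = (AddCircle.toCircle ((((m i : ℝ) * α ^ ((i : ℕ) + 1) : ℝ)) : AddCircle (1:ℝ)) : ℂ) := by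
      intro i
      rw [fourier_apply, gen]
      congr 1
      rw [← AddCircle.coe_zsmul]
      congr 1
      rw [zsmul_eq_mul]
    rw [Finset.prod_congr rfl fun i _ => h2 i, toCircle_sum]
    have hsum : (∑ i : Fin n, ((((m i : ℝ) * α ^ ((i : ℕ) + 1)) : ℝ) : AddCircle (1:ℝ)))
        = ((θ : ℝ) : AddCircle (1:ℝ)) :=
      (map_sum (QuotientAddGroup.mk' (AddSubgroup.zmultiples (1:ℝ)))
        (fun i : Fin n => (m i : ℝ) * α ^ ((i : ℕ) + 1)) Finset.univ).symm
    exact congrArg (fun z => (AddCircle.toCircle z : ℂ)) hsum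
  rw [key] at h1
  have hz : (θ : AddCircle (1:ℝ)) = 0 := by
    apply AddCircle.injective_toCircle (one_ne_zero (α := ℝ))
    rw [AddCircle.toCircle_zero]
    exact Subtype.coe_injective (h1.trans (OneMemClass.coe_one _).symm)
  obtain ⟨r, hr⟩ := (AddCircle.coe_eq_zero_iff (1:ℝ)).mp hz
  rw [zsmul_eq_mul, mul_one] at hr
  obtain ⟨i₀, hi₀⟩ : ∃ i, m i ≠ 0 := by
    by_contra h; push_neg at h; exact hm (funext h)
  have tα : Transcendental ℤ α := (liouville_liouvilleNumber (by norm_num)).transcendental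
  apply tα
  refine ⟨(∑ i : Fin n, Polynomial.C (m i) * Polynomial.X ^ ((i : ℕ) + 1)) - Polynomial.C r,
    ?_, ?_⟩
  · intro hp0
    have hc := congrArg (fun p => Polynomial.coeff p ((i₀ : ℕ) + 1)) hp0
    simp only [Polynomial.coeff_sub, Polynomial.finset_sum_coeff, Polynomial.coeff_C_mul,
      Polynomial.coeff_X_pow, Polynomial.coeff_C, Polynomial.coeff_zero] at hc
    rw [if_neg (by omega)] at hc
    rw [Finset.sum_eq_single_of_mem i₀ (Finset.mem_univ i₀) ?side] at hc
    · rw [if_pos rfl, mul_one, sub_zero] at hc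
      exact hi₀ hc
    case side =>
      intro j _ hj
      rw [if_neg, mul_zero]
      intro h
      exact hj (Fin.val_injective (by omega))
  · simp only [map_sub, map_sum, map_mul, Polynomial.aeval_C, map_pow, Polynomial.aeval_X]
    have : (algebraMap ℤ ℝ) r = (r : ℝ) := by simp
    rw [this]
    have h3 : ∑ i : Fin n, (algebraMap ℤ ℝ) (m i) * α ^ ((i : ℕ) + 1) = θ := by
      rw [hθ]; exact Finset.sum_congr rfl fun i _ => by simp
    rw [h3, hr, sub_self]

/-- For every natural number `n` there is an element `x` of the `n`-dimensional
torus `(ℝ/ℤ)ⁿ` whose cyclic subgroup `{k • x : k ∈ ℤ}` is dense. -/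
theorem exists_topological_generator_torus (n : ℕ) :
    ∃ x : Fin n → AddCircle (1 : ℝ),
      Dense ((AddSubgroup.zmultiples x : AddSubgroup (Fin n → AddCircle (1 : ℝ))) :
        Set (Fin n → AddCircle (1 : ℝ))) :=
  ⟨gen n, dense_orbit (gen n) (fun m hm => gen_spec m hm)⟩
end

section
/- With the suspension S = (W × Y)/D as below, assume in addition that W is a locally compact Hausdorff space, Y is Hausdorff, and the action of D on W is properly discontinuous (for all compact K, L ⊆ W, the set { d ∈ D : (d • K) ∩ L ≠ ∅ } is finite). Then the quotient space S is Hausdorff. -/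
open Pointwise Topology Filter

variable {D G : Type*} [Group D] [Group G]

/-- If `W` is a locally compact Hausdorff space, `Y` is Hausdorff, `D` acts on
`W` by homeomorphisms with properly discontinuous action, and `G` acts
continuously on `Y` with `φ : D →* G` of dense range, then the suspension
`S = (W × Y)/D` is Hausdorff. -/
theorem susp_t2Space
    {W Y : Type*} [MulAction D W] [MulAction G Y]
    [TopologicalSpace W] [TopologicalSpace Y] [TopologicalSpace G]
    [ContinuousSMul G Y] [LocallyCompactSpace W] [T2Space W] [T2Space Y]
    (hW : ∀ d : D, Continuous fun w : W => d • w)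
    (φ : D →* G) (hφ : DenseRange φ)
    (hpd : ∀ K L : Set W, IsCompact K → IsCompact L →
      {d : D | (d • K) ∩ L ≠ ∅}.Finite) :
    T2Space (Quotient (suspRel W Y φ)) := by
  set σ : W × Y → Quotient (suspRel W Y φ) := Quotient.mk _ with hσ
  -- σ is an open map
  have hopen : IsOpenMap σ := by
    intro U hU
    have hpre : σ ⁻¹' (σ '' U) = ⋃ d : D, (fun p : W × Y => (d • p.1, φ d • p.2)) ⁻¹' U := by
      ext p
      simp only [Set.mem_preimage, Set.mem_image, Set.mem_iUnion]
      constructor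
      · rintro ⟨q, hq, heq⟩
        obtain ⟨d, h1, h2⟩ := Quotient.exact heq.symm
        exact ⟨d, by simpa [h1, h2] using hq⟩
      · rintro ⟨d, hd⟩
        have hr : (suspRel W Y φ).r p (d • p.1, φ d • p.2) := ⟨d, rfl, rfl⟩
        exact ⟨(d • p.1, φ d • p.2), hd, (Quotient.sound hr).symm⟩
    rw [← isQuotientMap_quotient_mk'.isOpen_preimage]
    show IsOpen (σ ⁻¹' (σ '' U))
    rw [hpre]
    exact isOpen_iUnion fun d =>
      hU.preimage (((hW d).comp continuous_fst).prodMk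
        ((continuous_const_smul (φ d)).comp continuous_snd))
  have hoq : IsOpenQuotientMap σ :=
    ⟨Quotient.mk''_surjective, continuous_quotient_mk', hopen⟩
  -- the relation is closed
  set S : Set ((W × Y) × (W × Y)) := {pq | σ pq.1 = σ pq.2} with hS
  have hrel : IsClosed S := by
    rw [← closure_subset_iff_isClosed]
    rintro ⟨⟨w, y⟩, ⟨w', y'⟩⟩ hx
    obtain ⟨K, hKc, hKn⟩ := exists_compact_mem_nhds w
    obtain ⟨L, hLc, hLn⟩ := exists_compact_mem_nhds w'
    set F := {d : D | (d • K) ∩ L ≠ ∅} with hF'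
    have hF : F.Finite := hpd K L hKc hLc
    set R : D → Set ((W × Y) × (W × Y)) :=
      fun d => {pq | d • pq.1.1 = pq.2.1 ∧ φ d • pq.1.2 = pq.2.2} with hR
    have hRd : ∀ d, IsClosed (R d) := fun d =>
      (isClosed_eq ((hW d).comp (continuous_fst.comp continuous_fst))
          (continuous_fst.comp continuous_snd)).inter
        (isClosed_eq ((continuous_const_smul (φ d)).comp (continuous_snd.comp continuous_fst))
          (continuous_snd.comp continuous_snd))
    have hRsub : ∀ d, R d ⊆ S := by
      rintro d ⟨p, q⟩ ⟨h1, h2⟩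
      exact Quotient.sound ⟨d, h1, h2⟩
    set N : Set ((W × Y) × (W × Y)) :=
      (K ×ˢ (Set.univ : Set Y)) ×ˢ (L ×ˢ (Set.univ : Set Y)) with hNdef
    have hN : N ∈ 𝓝 (((w, y), (w', y'))) :=
      prod_mem_nhds (prod_mem_nhds hKn Filter.univ_mem)
        (prod_mem_nhds hLn Filter.univ_mem)
    have hsub : S ∩ N ⊆ ⋃ d ∈ F, R d := by
      rintro ⟨⟨a, b⟩, ⟨a', b'⟩⟩ ⟨hrel', hN'⟩
      obtain ⟨d, h1, h2⟩ := Quotient.exact hrel'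
      refine Set.mem_biUnion ?_ ⟨h1, h2⟩
      have ha : a ∈ K := hN'.1.1
      have ha' : a' ∈ L := hN'.2.1
      show (d • K) ∩ L ≠ ∅
      exact Set.nonempty_iff_ne_empty.mp ⟨d • a, ⟨a, ha, rfl⟩, h1 ▸ ha'⟩
    have hcl : (((w, y), (w', y'))) ∈ closure (S ∩ N) := by
      rw [mem_closure_iff_nhds]
      intro V hV
      obtain ⟨z, hz1, hz2⟩ := mem_closure_iff_nhds.mp hx (V ∩ N) (Filter.inter_mem hV hN)
      exact ⟨z, hz1.1, hz2, hz1.2⟩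
    have hcl2 := (closure_mono hsub) hcl
    rw [(hF.isClosed_biUnion fun d _ => hRd d).closure_eq] at hcl2
    obtain ⟨d, _, hd⟩ := Set.mem_iUnion₂.mp hcl2
    exact hRsub d hd
  -- conclude T2
  rw [t2_iff_isClosed_diagonal, ← (hoq.prodMap hoq).isQuotientMap.isClosed_preimage]
  exact hrel
end
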